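/- Let f : ℝ^n → ℝ be measurable, k a nonnegative integer, and suppose f is approximately differentiable of order k at almost every point of ℝ^n. For h ∈ ℕ, h ≥ 1, let f_h be the truncation of f at level h (f_h = f where −h < f < h, f_h = h where f ≥ h, f_h = −h where f ≤ −h). Suppose that for every h there exist measurable functions a_J^h : ℝ^n → ℝ, for multi-indices |J| ≤ k, such that for almost every x₀ ∈ ℝ^n the function f_h is approximately differentiable of order k at x₀ with polynomial x ↦ Σ_{|J| ≤ k} a_J^h(x₀)(x − x₀)^J. Then there exist measurable functions a_J : ℝ^n → ℝ, |J| ≤ k, such that for almost every x₀ ∈ ℝ^n, f is approximately differentiable of order k at x₀ with polynomial x ↦ Σ_{|J| ≤ k} a_J(x₀)(x − x₀)^J. (This is the paper's Lemma 4.5/boundedness-reduction lemma specialized to the abelian Carnot group ℝ^n.) -/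

import Mathlib

open MeasureTheory Metric Filter

noncomputable section

/-- `ℝ^n` with the Euclidean norm. -/
abbrev Euc (n : ℕ) := EuclideanSpace ℝ (Fin n)

/-- A set `S ⊆ ℝ^n` has density one at `x` if
`vol(S ∩ B(x,r))/vol(B(x,r)) → 1` as `r → 0⁺`. -/
def DensityOneAt {n : ℕ} (S : Set (Euc n)) (x : Euc n) : Prop :=
  Tendsto (fun r : ℝ => volume (S ∩ ball x r) / volume (ball x r))
    (nhdsWithin 0 (Set.Ioi 0)) (nhds 1)

/-- A set has density zero at `x` if its complement has density one at `x`. -/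
def DensityZeroAt {n : ℕ} (S : Set (Euc n)) (x : Euc n) : Prop :=
  DensityOneAt Sᶜ x

/-- Degree `|J|` of a multi-index. -/
def mdeg {n : ℕ} (J : Fin n → ℕ) : ℕ := ∑ i, J i

/-- Monomial `x^J = x₁^{j₁} ⋯ xₙ^{jₙ}`. -/
def mpow {n : ℕ} (x : Euc n) (J : Fin n → ℕ) : ℝ := ∏ i, (x i) ^ (J i)

/-- `J! = j₁! ⋯ jₙ!`. -/
def Jfact {n : ℕ} (J : Fin n → ℕ) : ℕ := ∏ i, Nat.factorial (J i)

/-- `p : ℝ^n → ℝ` is a polynomial function of (total) degree at most `k`. -/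
def IsPolyFun (n k : ℕ) (p : Euc n → ℝ) : Prop :=
  ∃ P : MvPolynomial (Fin n) ℝ, P.totalDegree ≤ k ∧
    ∀ x : Euc n, p x = MvPolynomial.eval (fun i => x i) P

/-- `f : D → ℝ` is approximately differentiable of order `k` at `x₀` (a density point
of `D`) with polynomial `p`: `p` has degree at most `k` and for every `ε > 0` the set
`{x ∈ D : |f x − p x| > ε ‖x − x₀‖^k}` has density zero at `x₀`. -/
def ApproxDiffAt {n : ℕ} (k : ℕ) (D : Set (Euc n)) (f : Euc n → ℝ)
    (x₀ : Euc n) (p : Euc n → ℝ) : Prop :=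
  DensityOneAt D x₀ ∧ IsPolyFun n k p ∧
    ∀ ε : ℝ, 0 < ε →
      DensityZeroAt {x | x ∈ D ∧ ε * ‖x - x₀‖ ^ k < |f x - p x|} x₀

/-- `f : D → ℝ` has an approximate `(k−1)`-Taylor polynomial at `x₀` (a density point
of `D`) with polynomial `p`: `p` has degree at most `k−1` and there is `M > 0` such that
`{x ∈ D : |f x − p x| > M ‖x − x₀‖^k}` has density zero at `x₀`. -/
def HasApproxTaylorAt {n : ℕ} (k : ℕ) (D : Set (Euc n)) (f : Euc n → ℝ)
    (x₀ : Euc n) (p : Euc n → ℝ) : Prop :=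
  DensityOneAt D x₀ ∧ IsPolyFun n (k - 1) p ∧
    ∃ M : ℝ, 0 < M ∧
      DensityZeroAt {x | x ∈ D ∧ M * ‖x - x₀‖ ^ k < |f x - p x|} x₀

/-- The finset of multi-indices `J` with `|J| ≤ k`. -/
def multiIdxLe (n k : ℕ) : Finset (Fin n → ℕ) :=
  (Fintype.piFinset fun _ : Fin n => Finset.range (k+1)).filter fun J => mdeg J ≤ k

/-- The finset of multi-indices `J` with `|J| < k` (i.e. `|J| ≤ k−1`). -/
def multiIdxLt (n k : ℕ) : Finset (Fin n → ℕ) :=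
  (Fintype.piFinset fun _ : Fin n => Finset.range (k+1)).filter fun J => mdeg J < k

/-- Partial derivative `∂g/∂xᵢ` (as a line derivative in the direction `eᵢ`). -/
def pd {n : ℕ} (i : Fin n) (g : Euc n → ℝ) : Euc n → ℝ :=
  fun x => lineDeriv ℝ g x (EuclideanSpace.single i 1)

/-- The list of directions `(1,…,1,2,…,2,…)` (direction `i` repeated `J i` times)
encoding the iterated partial derivative `∂^{|J|}/∂x₁^{j₁}⋯∂xₙ^{jₙ}`. -/
def multiList (n : ℕ) (J : Fin n → ℕ) : List (Fin n) :=
  (List.finRange n).flatMap fun i => List.replicate (J i) i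

/-- Iterated partial derivatives along a list of coordinate directions
(the head of the list is the outermost derivative). -/
def iterD {n : ℕ} : List (Fin n) → (Euc n → ℝ) → (Euc n → ℝ)
  | [], g => g
  | i :: L, g => pd i (iterD L g)

/-- The iterated partial derivatives along the list `L` all exist at every point. -/
def iterDExists {n : ℕ} : List (Fin n) → (Euc n → ℝ) → Prop
  | [], _ => True
  | i :: L, g => iterDExists L g ∧
      ∀ x : Euc n, LineDifferentiableAt ℝ (iterD L g) x (EuclideanSpace.single i 1)

/-- `D^J u = ∂^{|J|}u/∂x₁^{j₁}⋯∂xₙ^{jₙ}`. -/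
def DJ {n : ℕ} (J : Fin n → ℕ) (u : Euc n → ℝ) : Euc n → ℝ := iterD (multiList n J) u

/-- The Taylor polynomial of `u` of degree `k−1` centered at `x₀`:
`P_{x₀}(y) = Σ_{|I| ≤ k−1} D^I u(x₀) (y − x₀)^I / I!`. -/
def TaylorPoly {n : ℕ} (k : ℕ) (u : Euc n → ℝ) (x₀ : Euc n) : Euc n → ℝ :=
  fun y => ∑ I ∈ multiIdxLt n k, DJ I u x₀ * mpow (y - x₀) I / (Jfact I : ℝ)

/-- `u` belongs to `Lip(k, ℝ^n)` with constant `M`: all partial derivatives `D^J u`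
with `|J| ≤ k−1` exist at every point, and for all such `J` and all `x, x₀`,
`|D^J u(x₀)| ≤ M` and `|D^J u(x) − D^J P_{x₀}(x)| ≤ M ‖x − x₀‖^{k−|J|}`. -/
def MemLip (n k : ℕ) (M : ℝ) (u : Euc n → ℝ) : Prop :=
  (∀ J : Fin n → ℕ, mdeg J < k → iterDExists (multiList n J) u) ∧
  ∀ J : Fin n → ℕ, mdeg J < k → ∀ x x₀ : Euc n,
    |DJ J u x₀| ≤ M ∧
    |DJ J u x - DJ J (TaylorPoly k u x₀) x| ≤ M * ‖x - x₀‖ ^ (k - mdeg J)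

/-- Truncation of `f` at level `h`: equals `f` where `−h < f < h`, equals `h` where
`f ≥ h`, and equals `−h` where `f ≤ −h`. -/
def trunc {n : ℕ} (h : ℕ) (f : Euc n → ℝ) : Euc n → ℝ :=
  fun x => if (h : ℝ) ≤ f x then (h : ℝ) else if f x ≤ -(h : ℝ) then -(h : ℝ) else f x

/-! At almost every `x₀`, take the level `m = ⌈|f x₀|⌉`. The function `f` agrees with its
truncation `f_{m+1}` on `{|f| < m + 1}`, a set which by Lebesgue's density theorem has density one
at almost every one of its points, `x₀` among them. Approximate differentiability at `x₀` only
sees a set of density one, so `f` inherits the polynomial of `f_{m+1}` there. The coefficients of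
`f` are those of `f_{m+1}` glued along the measurable map `x ↦ ⌈|f x|⌉ : ℕ`. -/

open Topology

variable {n : ℕ}

lemma measure_inter_closedBall_eq_inter_ball (S : Set (Euc n)) (x : Euc n) {r : ℝ} (hr : r ≠ 0) :
    volume (S ∩ closedBall x r) = volume (S ∩ ball x r) := by
  have hsphere : sphere x r =ᵐ[volume] (∅ : Set (Euc n)) :=
    ae_eq_empty.2 (Measure.addHaar_sphere_of_ne_zero volume x hr)
  have hball : closedBall x r =ᵐ[volume] ball x r := by
    rw [← ball_union_sphere]
    exact union_ae_eq_left_of_ae_eq_empty hsphere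
  exact measure_congr ((ae_eq_refl S).inter hball)

lemma ae_restrict_densityOneAt (S : Set (Euc n)) :
    ∀ᵐ x ∂(volume.restrict S), DensityOneAt S x := by
  filter_upwards [Besicovitch.ae_tendsto_measure_inter_div volume S] with x hx
  refine hx.congr' ?_
  filter_upwards [self_mem_nhdsWithin] with r (hr : 0 < r)
  rw [measure_inter_closedBall_eq_inter_ball S x hr.ne',
    ← Set.univ_inter (closedBall x r), measure_inter_closedBall_eq_inter_ball _ x hr.ne',
    Set.univ_inter]

lemma measure_inter_ball_div_le_one (S : Set (Euc n)) (x : Euc n) (r : ℝ) :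
    volume (S ∩ ball x r) / volume (ball x r) ≤ 1 :=
  ENNReal.div_le_of_le_mul (by rw [one_mul]; exact measure_mono Set.inter_subset_right)

lemma DensityOneAt.mono {S T : Set (Euc n)} {x : Euc n} (h : DensityOneAt S x) (hST : S ⊆ T) :
    DensityOneAt T x :=
  tendsto_of_tendsto_of_tendsto_of_le_of_le h tendsto_const_nhds
    (fun _ => ENNReal.div_le_div_right (measure_mono (Set.inter_subset_inter_left _ hST)) _)
    (measure_inter_ball_div_le_one T x)

lemma DensityOneAt.inter {S T : Set (Euc n)} {x : Euc n} (hS : DensityOneAt S x)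
    (hT : DensityOneAt T x) (hTm : NullMeasurableSet T) : DensityOneAt (S ∩ T) x := by
  have hlower : Tendsto (fun r : ℝ => volume (S ∩ ball x r) / volume (ball x r) +
      volume (T ∩ ball x r) / volume (ball x r) - 1) (𝓝[>] 0) (𝓝 1) := by
    simpa using ENNReal.Tendsto.sub (hS.add hT) tendsto_const_nhds (Or.inr ENNReal.one_ne_top)
  refine tendsto_of_tendsto_of_tendsto_of_le_of_le' hlower tendsto_const_nhds ?_
    (.of_forall (measure_inter_ball_div_le_one _ x))
  filter_upwards [self_mem_nhdsWithin] with r (hr : 0 < r)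
  have hB : volume (ball x r) ≠ 0 := (measure_ball_pos volume x hr).ne'
  have hsum : volume (S ∩ ball x r) + volume (T ∩ ball x r) ≤
      volume (ball x r) + volume (S ∩ T ∩ ball x r) := by
    rw [← measure_union_add_inter₀ _ (hTm.inter measurableSet_ball.nullMeasurableSet),
      ← Set.inter_inter_distrib_right]
    exact add_le_add (measure_mono (Set.union_subset Set.inter_subset_right Set.inter_subset_right))
      le_rfl
  rw [tsub_le_iff_left, ← ENNReal.add_div, ← ENNReal.div_self hB measure_ball_lt_top.ne,
    ← ENNReal.add_div]
  exact ENNReal.div_le_div_right hsum _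

lemma ApproxDiffAt.congr_of_densityOneAt {k : ℕ} {D S : Set (Euc n)} {f g : Euc n → ℝ}
    {x₀ : Euc n} {p : Euc n → ℝ} (hg : ApproxDiffAt k D g x₀ p) (hfg : Set.EqOn f g S)
    (hS : DensityOneAt S x₀) (hSm : NullMeasurableSet S) : ApproxDiffAt k D f x₀ p := by
  refine ⟨hg.1, hg.2.1, fun ε hε => ((hg.2.2 ε hε).inter hS hSm).mono ?_⟩
  rintro x ⟨hxg, hxS⟩ ⟨hxD, hxf⟩
  exact hxg ⟨hxD, hfg hxS ▸ hxf⟩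

lemma trunc_eq_of_abs_lt {h : ℕ} {f : Euc n → ℝ} {x : Euc n} (hx : |f x| < h) :
    trunc h f x = f x := by
  rw [abs_lt] at hx
  simp only [trunc, if_neg (not_le.2 hx.2), if_neg (not_le.2 hx.1)]

theorem stmt15_general (n : ℕ) (k : ℕ) (f : Euc n → ℝ) (hf : Measurable f)
    (ha : ∀ h : ℕ, 1 ≤ h →
      ∃ a' : (Fin n → ℕ) → Euc n → ℝ,
        (∀ J ∈ multiIdxLe n k, Measurable (a' J)) ∧
        ∀ᵐ x₀ ∂(volume : Measure (Euc n)),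
          ApproxDiffAt k Set.univ (trunc h f) x₀
            (fun x => ∑ J ∈ multiIdxLe n k, a' J x₀ * mpow (x - x₀) J)) :
    ∃ a : (Fin n → ℕ) → Euc n → ℝ,
      (∀ J ∈ multiIdxLe n k, Measurable (a J)) ∧
      ∀ᵐ x₀ ∂(volume : Measure (Euc n)),
        ApproxDiffAt k Set.univ f x₀
          (fun x => ∑ J ∈ multiIdxLe n k, a J x₀ * mpow (x - x₀) J) := by
  choose A hAm hA using fun m : ℕ => ha (m + 1) m.succ_pos
  have hN : Measurable fun x => ⌈|f x|⌉₊ := hf.abs.nat_ceil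
  refine ⟨fun J x => A ⌈|f x|⌉₊ J x, fun J hJ => ?_, ?_⟩
  · exact (measurable_from_prod_countable_left (f := fun p : Euc n × ℕ => A p.2 J p.1)
      fun m => hAm m J hJ).comp (measurable_id.prodMk hN)
  have hlevel : ∀ m : ℕ, MeasurableSet {x | |f x| < (m + 1 : ℕ)} :=
    fun m => measurableSet_lt hf.abs measurable_const
  have hdens : ∀ᵐ x₀ ∂(volume : Measure (Euc n)), ∀ m : ℕ,
      |f x₀| < (m + 1 : ℕ) → DensityOneAt {x | |f x| < (m + 1 : ℕ)} x₀ :=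
    ae_all_iff.2 fun m => (ae_restrict_iff' (hlevel m)).1 (ae_restrict_densityOneAt _)
  filter_upwards [hdens, ae_all_iff.2 hA] with x₀ hx₀ hAx₀
  have hx₀_mem : |f x₀| < (⌈|f x₀|⌉₊ + 1 : ℕ) := by
    push_cast
    exact (Nat.le_ceil _).trans_lt (lt_add_one _)
  exact (hAx₀ ⌈|f x₀|⌉₊).congr_of_densityOneAt (fun x hx => (trunc_eq_of_abs_lt hx).symm)
    (hx₀ _ hx₀_mem) (hlevel _).nullMeasurableSet

/-- **Boundedness reduction** (abelian case). If each truncation `f_h` of `f` admits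
measurable coefficients for its approximate derivatives of order `k`, then so
does `f`. -/
theorem stmt15 (n : ℕ) (hn : 0 < n) (k : ℕ) (f : Euc n → ℝ) (hf : Measurable f)
    (hdiff : ∀ᵐ x₀ ∂(volume : Measure (Euc n)),
      ∃ p : Euc n → ℝ, ApproxDiffAt k Set.univ f x₀ p)
    (ha : ∀ h : ℕ, 1 ≤ h →
      ∃ a' : (Fin n → ℕ) → Euc n → ℝ,
        (∀ J ∈ multiIdxLe n k, Measurable (a' J)) ∧
        ∀ᵐ x₀ ∂(volume : Measure (Euc n)),
          ApproxDiffAt k Set.univ (trunc h f) x₀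
            (fun x => ∑ J ∈ multiIdxLe n k, a' J x₀ * mpow (x - x₀) J)) :
    ∃ a : (Fin n → ℕ) → Euc n → ℝ,
      (∀ J ∈ multiIdxLe n k, Measurable (a J)) ∧
      ∀ᵐ x₀ ∂(volume : Measure (Euc n)),
        ApproxDiffAt k Set.univ f x₀
          (fun x => ∑ J ∈ multiIdxLe n k, a J x₀ * mpow (x - x₀) J) :=
  stmt15_general n k f hf ha
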